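/- arXiv:2412.11893 — 2 statements merged into one kernel-verified Lean document; each statement's English description precedes it below -/
import Mathlib

section
/- Let A be an irreducible nonnegative real n×n matrix with spectral radius ρ, let f be a real polynomial, and let y be a nonzero nonnegative vector. If f(A)y ≤ ry entrywise for some real r, then f(ρ) ≤ r, with equality if and only if f(A)y = ry. Moreover, if (f(A)y)_i < r·y_i for some coordinate i, then f(ρ) < r. -/
open SimpleGraph

/-- `H` is a minor of `G`: there are nonempty pairwise-disjoint connected branch sets
in `G`, one for each vertex of `H`, with an edge of `G` between the branch sets of any
two adjacent vertices of `H`. -/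
def SimpleGraph.IsMinorOf {β V : Type*} (H : SimpleGraph β) (G : SimpleGraph V) : Prop :=
  ∃ f : β → Set V,
    (∀ b, (f b).Nonempty) ∧
    (Pairwise fun b₁ b₂ => Disjoint (f b₁) (f b₂)) ∧
    (∀ b, (G.induce (f b)).Connected) ∧
    (∀ b₁ b₂, H.Adj b₁ b₂ → ∃ a₁ ∈ f b₁, ∃ a₂ ∈ f b₂, G.Adj a₁ a₂)

/-- A graph is outerplanar iff it has no `K₄` minor and no `K_{2,3}` minor. -/
def SimpleGraph.Outerplanar {V : Type*} (G : SimpleGraph V) : Prop :=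
  ¬ (completeGraph (Fin 4)).IsMinorOf G ∧
  ¬ (completeBipartiteGraph (Fin 2) (Fin 3)).IsMinorOf G

/-- The graph obtained from `G` by adding the edge `uv`. -/
def SimpleGraph.addEdge {V : Type*} (G : SimpleGraph V) (u v : V) : SimpleGraph V :=
  G ⊔ SimpleGraph.fromEdgeSet {s(u, v)}

/-- An (edge-)maximal bipartite outerplanar graph: bipartite and outerplanar, and adding any
new edge between distinct non-adjacent vertices destroys outerplanarity or bipartiteness. -/
def SimpleGraph.MaxBipOuterplanar {V : Type*} (G : SimpleGraph V) : Prop :=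
  G.Outerplanar ∧ G.Colorable 2 ∧
    ∀ u v : V, u ≠ v → ¬ G.Adj u v →
      ¬ ((G.addEdge u v).Outerplanar ∧ (G.addEdge u v).Colorable 2)

/-- A graph on at least 3 vertices is 2-connected if it is connected and remains
connected after deleting any single vertex. -/
def SimpleGraph.TwoConnected {V : Type*} [Fintype V] (G : SimpleGraph V) : Prop :=
  3 ≤ Fintype.card V ∧ G.Connected ∧
    ∀ v : V, (((⊤ : G.Subgraph).deleteVerts {v}).coe).Connected

/-- The spectral radius of a graph: the largest (real) eigenvalue of its adjacency matrix. -/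
noncomputable def SimpleGraph.specRad {V : Type*} [Fintype V] (G : SimpleGraph V) : ℝ := by
  classical exact sSup (spectrum ℝ (G.adjMatrix ℝ))

/-- The least eigenvalue of a graph: the smallest (real) eigenvalue of its adjacency matrix. -/
noncomputable def SimpleGraph.leastEig {V : Type*} [Fintype V] (G : SimpleGraph V) : ℝ := by
  classical exact sInf (spectrum ℝ (G.adjMatrix ℝ))

/-- The star on `n` vertices: vertex `0` adjacent to all others. -/
def starGraph (n : ℕ) : SimpleGraph (Fin n) where
  Adj i j := i ≠ j ∧ (i.val = 0 ∨ j.val = 0)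
  symm := by constructor; intro i j h; exact ⟨h.1.symm, h.2.symm⟩
  loopless := by constructor; intro i h; exact h.1 rfl

/-- The spectral radius of a real square matrix: the supremum of the moduli of its
complex eigenvalues. -/
noncomputable def matSpecRad {n : ℕ} (A : Matrix (Fin n) (Fin n) ℝ) : ℝ :=
  sSup ((fun z : ℂ => ‖z‖) '' spectrum ℂ (A.map Complex.ofReal))

/-- Irreducibility of a nonnegative matrix: for all `i j` some power has positive `(i,j)` entry. -/
def MatIrreducible {n : ℕ} (A : Matrix (Fin n) (Fin n) ℝ) : Prop :=
  ∀ i j, ∃ k : ℕ, 0 < (A ^ k) i j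

/-- A combinatorial plane embedding of a (connected) graph `G`: a family of closed walks
(face boundaries) such that every edge of `G` lies on exactly two face sides, together
with Euler's formula. -/
structure PlaneEmbedding {V : Type*} [Fintype V] [DecidableEq V]
    (G : SimpleGraph V) [DecidableRel G.Adj] where
  numFaces : ℕ
  base : Fin numFaces → V
  boundary : (f : Fin numFaces) → G.Walk (base f) (base f)
  edge_twice : ∀ e ∈ G.edgeSet, (∑ f : Fin numFaces, ((boundary f).edges.count e)) = 2
  euler : (Fintype.card V : ℤ) + numFaces - G.edgeFinset.card = 2

/-- An outerplane embedding: a plane embedding with a distinguished (outer) face whose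
boundary passes through every vertex of `G`. -/
structure OuterplaneEmbedding {V : Type*} [Fintype V] [DecidableEq V]
    (G : SimpleGraph V) [DecidableRel G.Adj] extends PlaneEmbedding G where
  outer : Fin numFaces
  outer_all : ∀ v : V, v ∈ (boundary outer).support

/-!
Perron–Frobenius for `M = Aᵀ` gives a real `ρ` and a positive vector `u` with `u A = ρ u`. We find
it by maximising the Collatz–Wielandt function `x ↦ minᵢ (M x)ᵢ / xᵢ` over the simplex, after
smoothing by a positive matrix `C` commuting with `M` (a sum of powers of `M`); at a maximiser any
defect `M u - ρ u ≥ 0, ≠ 0` would be made positive by `C` and push the value above the maximum.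
For an eigenpair `A v = μ v` over `ℂ`, `|μ| |v| ≤ A |v|`, and pairing with `u` gives `|μ| ≤ ρ`;
since `ρ` is itself an eigenvalue, it is the spectral radius.

Then `u f(A) = f(ρ) u`, so pairing `f(A) y ≤ r y` with `u` gives `f(ρ) (u ⬝ y) ≤ r (u ⬝ y)` where
`u ⬝ y > 0`; as `u` is positive, the two pairings agree only if `f(A) y = r y` coordinatewise.
-/

open Matrix Finset Polynomial

namespace Matrix

variable {ι : Type*} [Fintype ι]

lemma dotProduct_pos_of_pos_of_nonneg {u w : ι → ℝ} (hu : ∀ i, 0 < u i) (hw : 0 ≤ w)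
    (hw0 : w ≠ 0) : 0 < u ⬝ᵥ w := by
  obtain ⟨j, hj⟩ := Function.ne_iff.mp hw0
  exact sum_pos' (fun i _ => mul_nonneg (hu i).le (hw i))
    ⟨j, mem_univ j, mul_pos (hu j) (lt_of_le_of_ne (hw j) (Ne.symm hj))⟩

lemma dotProduct_eq_dotProduct_iff_of_pos {u a b : ι → ℝ} (hu : ∀ i, 0 < u i) (hab : a ≤ b) :
    u ⬝ᵥ a = u ⬝ᵥ b ↔ a = b := by
  rw [dotProduct, dotProduct,
    sum_eq_sum_iff_of_le fun i _ => mul_le_mul_of_nonneg_left (hab i) (hu i).le, funext_iff]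
  simp only [mem_univ, forall_const, mul_right_inj' (hu _).ne']

lemma mulVec_pos_of_pos {C : Matrix ι ι ℝ} (hC : ∀ i j, 0 < C i j) {x : ι → ℝ} (hx : 0 ≤ x)
    (hx0 : x ≠ 0) (i : ι) : 0 < (C *ᵥ x) i :=
  dotProduct_pos_of_pos_of_nonneg (hC i) hx hx0

lemma norm_mulVec_map_ofReal_le {A : Matrix ι ι ℝ} (hA : ∀ i j, 0 ≤ A i j) (v : ι → ℂ) (i : ι) :
    ‖(A.map Complex.ofReal *ᵥ v) i‖ ≤ (A *ᵥ fun j => ‖v j‖) i := by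
  calc ‖∑ j, (A i j : ℂ) * v j‖ ≤ ∑ j, ‖(A i j : ℂ) * v j‖ := norm_sum_le _ _
    _ = ∑ j, A i j * ‖v j‖ := by
      simp only [norm_mul, Complex.norm_real, Real.norm_of_nonneg (hA i _)]

section CollatzWielandt

variable [Nonempty ι]

noncomputable def collatzWielandt (M : Matrix ι ι ℝ) (x : ι → ℝ) : ℝ :=
  univ.inf' univ_nonempty fun i => (M *ᵥ x) i / x i

variable {M : Matrix ι ι ℝ} {x : ι → ℝ} {c : ℝ}

lemma le_collatzWielandt_iff (hx : ∀ i, 0 < x i) :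
    c ≤ collatzWielandt M x ↔ c • x ≤ M *ᵥ x := by
  simp only [collatzWielandt, le_inf'_iff, mem_univ, forall_const, le_div_iff₀ (hx _),
    Pi.le_def, Pi.smul_apply, smul_eq_mul]

lemma lt_collatzWielandt_iff (hx : ∀ i, 0 < x i) :
    c < collatzWielandt M x ↔ ∀ i, c * x i < (M *ᵥ x) i := by
  simp only [collatzWielandt, lt_inf'_iff, mem_univ, forall_const, lt_div_iff₀ (hx _)]

lemma collatzWielandt_smul {t : ℝ} (ht : 0 < t) :
    collatzWielandt M (t • x) = collatzWielandt M x := by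
  simp only [collatzWielandt, mulVec_smul, Pi.smul_apply, smul_eq_mul,
    mul_div_mul_left _ _ ht.ne']

lemma continuousOn_collatzWielandt : ContinuousOn (collatzWielandt M) {x | ∀ i, 0 < x i} := by
  refine ContinuousOn.finset_inf'_apply _ fun i _ =>
    ContinuousOn.div ?_ (continuous_apply i).continuousOn fun x hx => (hx i).ne'
  exact ((continuous_apply i).comp
    (Continuous.matrix_mulVec continuous_const continuous_id)).continuousOn

lemma lt_collatzWielandt_mulVec_of_ne {C : Matrix ι ι ℝ} (hCM : Commute C M)
    (hC : ∀ i j, 0 < C i j) {u : ι → ℝ} (hu : ∀ i, 0 < u i) {ρ : ℝ} (hle : ρ • u ≤ M *ᵥ u)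
    (hne : M *ᵥ u ≠ ρ • u) : ρ < collatzWielandt M (C *ᵥ u) := by
  have hCu : ∀ i, 0 < (C *ᵥ u) i := mulVec_pos_of_pos hC (fun i => (hu i).le)
    fun h => (hu (Classical.arbitrary ι)).ne' (congrFun h _)
  have hdefect := mulVec_pos_of_pos hC (sub_nonneg.mpr hle) (sub_ne_zero.mpr hne)
  rw [lt_collatzWielandt_iff hCu]
  intro i
  have := hdefect i
  rwa [mulVec_sub, mulVec_mulVec, hCM.eq, ← mulVec_mulVec, mulVec_smul, Pi.sub_apply,
    Pi.smul_apply, smul_eq_mul, sub_pos] at this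

end CollatzWielandt

variable [DecidableEq ι]

lemma exists_pos_commute_of_pow_pos {M : Matrix ι ι ℝ} (hM : ∀ i j, 0 ≤ M i j)
    (hirr : ∀ i j, ∃ k : ℕ, 0 < (M ^ k) i j) :
    ∃ C : Matrix ι ι ℝ, Commute C M ∧ ∀ i j, 0 < C i j := by
  choose k hk using hirr
  refine ⟨∑ p : ι × ι, M ^ k p.1 p.2,
    Commute.sum_left _ _ _ fun p _ => (Commute.refl M).pow_left _, fun i j => ?_⟩
  rw [sum_apply]
  exact sum_pos' (fun p _ => pow_apply_nonneg hM _ i j) ⟨(i, j), mem_univ _, hk i j⟩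

theorem exists_pos_eigenvector_of_pow_pos [Nonempty ι] {M : Matrix ι ι ℝ}
    (hM : ∀ i j, 0 ≤ M i j) (hirr : ∀ i j, ∃ k : ℕ, 0 < (M ^ k) i j) :
    ∃ (ρ : ℝ) (u : ι → ℝ), (∀ i, 0 < u i) ∧ M *ᵥ u = ρ • u := by
  obtain ⟨C, hCM, hC⟩ := exists_pos_commute_of_pow_pos hM hirr
  have hCΔ : ∀ x ∈ stdSimplex ℝ ι, ∀ i, 0 < (C *ᵥ x) i := fun x hx =>
    mulVec_pos_of_pos hC hx.1 fun h => by simpa [h] using hx.2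
  obtain ⟨x₀, hx₀, hmax⟩ := (isCompact_stdSimplex ℝ ι).exists_isMaxOn
    ⟨_, single_mem_stdSimplex ℝ (Classical.arbitrary ι)⟩
    (continuousOn_collatzWielandt.comp
      (Continuous.matrix_mulVec continuous_const continuous_id).continuousOn hCΔ)
  set u := C *ᵥ x₀
  have hu : ∀ i, 0 < u i := hCΔ x₀ hx₀
  refine ⟨collatzWielandt M u, u, hu, ?_⟩
  by_contra hne
  have hlt := lt_collatzWielandt_mulVec_of_ne hCM hC hu
    ((le_collatzWielandt_iff hu).mp le_rfl) hne
  have hs : 0 < ∑ i, u i := sum_pos (fun i _ => hu i) univ_nonempty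
  have hx₁ : (∑ i, u i)⁻¹ • u ∈ stdSimplex ℝ ι :=
    ⟨fun i => smul_nonneg (inv_nonneg.mpr hs.le) (hu i).le, by
      simp only [Pi.smul_apply, smul_eq_mul, ← mul_sum, inv_mul_cancel₀ hs.ne']⟩
  have hmax₁ : collatzWielandt M (C *ᵥ ((∑ i, u i)⁻¹ • u)) ≤ collatzWielandt M u := hmax hx₁
  rw [mulVec_smul, collatzWielandt_smul (inv_pos.mpr hs)] at hmax₁
  exact hlt.not_ge hmax₁

lemma vecMul_aeval_of_vecMul_eq_smul {R : Type*} [CommRing R] {A : Matrix ι ι R} {u : ι → R}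
    {ρ : R} (h : u ᵥ* A = ρ • u) (p : R[X]) : u ᵥ* aeval A p = p.eval ρ • u := by
  induction p using Polynomial.induction_on with
  | C a => simp [Algebra.algebraMap_eq_smul_one, vecMul_smul]
  | add p q hp hq => simp [vecMul_add, hp, hq, add_smul]
  | monomial k a ih =>
    rw [pow_succ, ← mul_assoc, map_mul, aeval_X, ← vecMul_vecMul, ih, smul_vecMul, h, smul_smul,
      eval_mul_X]

variable {A : Matrix ι ι ℝ} {u : ι → ℝ} {ρ : ℝ}

lemma norm_le_of_mem_spectrum_of_vecMul_eq_smul (hA : ∀ i j, 0 ≤ A i j) (hu : ∀ i, 0 < u i)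
    (h : u ᵥ* A = ρ • u) {μ : ℂ} (hμ : μ ∈ spectrum ℂ (A.map Complex.ofReal)) : ‖μ‖ ≤ ρ := by
  rw [← spectrum_toLin', ← Module.End.hasEigenvalue_iff_mem_spectrum] at hμ
  obtain ⟨v, hv⟩ := hμ.exists_hasEigenvector
  have hAv : A.map Complex.ofReal *ᵥ v = μ • v := by
    simpa [toLin'_apply] using hv.apply_eq_smul
  set w : ι → ℝ := fun j => ‖v j‖
  have hw : ‖μ‖ • w ≤ A *ᵥ w := fun i => by
    simpa [hAv, w] using norm_mulVec_map_ofReal_le hA v i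
  have huw : 0 < u ⬝ᵥ w := dotProduct_pos_of_pos_of_nonneg hu (fun j => norm_nonneg _)
    fun h0 => hv.2 (funext fun j => norm_eq_zero.mp (congrFun h0 j))
  have : ‖μ‖ * (u ⬝ᵥ w) ≤ ρ * (u ⬝ᵥ w) :=
    calc ‖μ‖ * (u ⬝ᵥ w) = u ⬝ᵥ (‖μ‖ • w) := by rw [dotProduct_smul, smul_eq_mul]
      _ ≤ u ⬝ᵥ (A *ᵥ w) := dotProduct_le_dotProduct_of_nonneg_left hw fun i => (hu i).le
      _ = ρ * (u ⬝ᵥ w) := by rw [dotProduct_mulVec, h, smul_dotProduct, smul_eq_mul]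
  exact le_of_mul_le_mul_right this huw

lemma ofReal_mem_spectrum_map_of_vecMul_eq_smul (hu : u ≠ 0) (h : u ᵥ* A = ρ • u) :
    (ρ : ℂ) ∈ spectrum ℂ (A.map Complex.ofReal) := by
  have hρ : ρ ∈ spectrum ℝ Aᵀ := by
    rw [← spectrum_toLin', ← Module.End.hasEigenvalue_iff_mem_spectrum]
    exact Module.End.hasEigenvalue_of_hasEigenvector
      ⟨by simpa [Module.End.mem_eigenspace_iff, toLin'_apply, mulVec_transpose] using h, hu⟩
  rw [mem_spectrum_iff_isRoot_charpoly, charpoly_transpose] at hρ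
  rw [mem_spectrum_iff_isRoot_charpoly]
  exact charpoly_map A Complex.ofRealHom ▸ hρ.map

lemma isGreatest_norm_spectrum_of_vecMul_eq_smul [Nonempty ι] (hA : ∀ i j, 0 ≤ A i j)
    (hu : ∀ i, 0 < u i) (h : u ᵥ* A = ρ • u) :
    IsGreatest ((‖·‖) '' spectrum ℂ (A.map Complex.ofReal)) ρ := by
  have hmem := ofReal_mem_spectrum_map_of_vecMul_eq_smul
    (fun h0 => (hu (Classical.arbitrary ι)).ne' (congrFun h0 _)) h
  have hbound : ∀ μ ∈ spectrum ℂ (A.map Complex.ofReal), ‖μ‖ ≤ ρ := fun μ hμ =>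
    norm_le_of_mem_spectrum_of_vecMul_eq_smul hA hu h hμ
  have hρ : |ρ| ≤ ρ := by simpa using hbound _ hmem
  refine ⟨⟨_, hmem, ?_⟩, Set.forall_mem_image.mpr hbound⟩
  simpa using (abs_nonneg ρ).trans hρ

end Matrix

theorem stmt0 {n : ℕ} (A : Matrix (Fin n) (Fin n) ℝ)
    (hA : ∀ i j, 0 ≤ A i j) (hirr : MatIrreducible A)
    (f : Polynomial ℝ) (y : Fin n → ℝ) (hy : y ≠ 0) (hy0 : ∀ i, 0 ≤ y i)
    (r : ℝ) (hle : ∀ i, ((Polynomial.aeval A) f).mulVec y i ≤ r * y i) :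
    f.eval (matSpecRad A) ≤ r ∧
    (f.eval (matSpecRad A) = r ↔ ∀ i, ((Polynomial.aeval A) f).mulVec y i = r * y i) ∧
    ((∃ i, ((Polynomial.aeval A) f).mulVec y i < r * y i) → f.eval (matSpecRad A) < r) := by
  have : Nonempty (Fin n) := ⟨(Function.ne_iff.mp hy).choose⟩
  obtain ⟨ρ, u, hu, hρ⟩ := exists_pos_eigenvector_of_pow_pos (M := Aᵀ) (fun i j => hA j i)
    fun i j => (hirr j i).imp fun k hk => by rwa [← transpose_pow]
  rw [mulVec_transpose] at hρ
  rw [matSpecRad, (isGreatest_norm_spectrum_of_vecMul_eq_smul hA hu hρ).csSup_eq]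
  have huy : 0 < u ⬝ᵥ y := dotProduct_pos_of_pos_of_nonneg hu hy0 hy
  have hFy : u ⬝ᵥ (aeval A f *ᵥ y) = f.eval ρ * (u ⬝ᵥ y) := by
    rw [dotProduct_mulVec, vecMul_aeval_of_vecMul_eq_smul hρ, smul_dotProduct, smul_eq_mul]
  have hry : u ⬝ᵥ (r • y) = r * (u ⬝ᵥ y) := by rw [dotProduct_smul, smul_eq_mul]
  have hle' : aeval A f *ᵥ y ≤ r • y := hle
  have hmono : f.eval ρ ≤ r := le_of_mul_le_mul_right
    (hFy ▸ hry ▸ dotProduct_le_dotProduct_of_nonneg_left hle' fun i => (hu i).le) huy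
  have heq : f.eval ρ = r ↔ ∀ i, (aeval A f *ᵥ y) i = r * y i := by
    rw [← mul_left_inj' huy.ne', ← hFy, ← hry, dotProduct_eq_dotProduct_iff_of_pos hu hle',
      funext_iff]
    rfl
  exact ⟨hmono, heq, fun ⟨i, hi⟩ => hmono.lt_of_ne fun h => (heq.mp h i).not_lt hi⟩
end

section
/- Let G be a maximal 2-connected bipartite outerplanar graph of order n ≥ 2. Then every vertex v of G has degree at most n/2. -/
open SimpleGraph

/-!
Fix a vertex `v` with a neighbour `u₀` and let `d` be the distance to `u₀` in `G - v`, which is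
connected. Every other neighbour `u` of `v` has a neighbour `w` in `G - v` with `d w < d u`, and
`w` is not adjacent to `v` since `G` has no triangle. No `w` serves two neighbours `u₁, u₂`:
otherwise follow a shortest path from `w` to `u₀` up to its first neighbour `x` of `v`; then
`d x ≤ d w`, so `x ∉ {u₁, u₂}`, and `{v}` and the path before `x` against `{u₁}, {u₂}, {x}` are the
branch sets of a `K_{2,3}` minor. So `deg v - 1 ≤ n - 1 - deg v`.
-/

namespace SimpleGraph

variable {V : Type*} {G : SimpleGraph V}

theorem connected_induce_singleton (a : V) : (G.induce {a}).Connected := by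
  rw [induce_singleton_eq_top]
  exact connected_top

theorem Connected.induce_insert {C : Set V} {a b : V} (hC : (G.induce C).Connected)
    (hb : b ∈ C) (hab : G.Adj a b) : (G.induce (insert a C)).Connected := by
  rw [← Set.singleton_union]
  exact connected_induce_union (connected_induce_singleton a).preconnected hC.preconnected
    rfl hb hab

theorem Walk.exists_connected_induce_of_start_mem {W : Set V} :
    ∀ {a b : V} (p : G.Walk a b), a ∈ W → b ∉ W →
      ∃ C ⊆ W, a ∈ C ∧ (G.induce C).Connected ∧
        ∃ x ∈ p.support, x ∉ W ∧ ∃ c ∈ C, G.Adj x c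
  | _, _, .nil, ha, hb => absurd ha hb
  | a, _, .cons (v := a') h q, ha, hb => by
    by_cases ha' : a' ∈ W
    · obtain ⟨C, hCW, ha'C, hC, x, hx, hxW, c, hc, hxc⟩ :=
        q.exists_connected_induce_of_start_mem ha' hb
      exact ⟨insert a C, Set.insert_subset ha hCW, Set.mem_insert a C,
        hC.induce_insert ha'C h, x, List.mem_cons_of_mem a hx, hxW,
        c, Set.mem_insert_of_mem a hc, hxc⟩
    · exact ⟨{a}, Set.singleton_subset_iff.2 ha, rfl, connected_induce_singleton a,
        a', by simp, ha', a, rfl, h.symm⟩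

theorem Connected.exists_adj_dist_lt (hG : G.Connected) {u u₀ : V} (hu : u ≠ u₀) :
    ∃ w, G.Adj u w ∧ G.dist w u₀ < G.dist u u₀ := by
  obtain ⟨p, hp⟩ := hG.exists_walk_length_eq_dist u u₀
  cases p with
  | nil => exact absurd rfl hu
  | cons h q =>
    refine ⟨_, h, ?_⟩
    rw [← hp, Walk.length_cons]
    exact Nat.lt_succ_of_le (dist_le q)

theorem completeBipartiteGraph_two_three_isMinorOf {v : V} {x : Fin 3 → V} {C : Set V}
    (hx : Function.Injective x) (hvx : ∀ i, G.Adj v (x i)) (hC : (G.induce C).Connected)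
    (hvC : v ∉ C) (hxC : ∀ i, x i ∉ C) (hCx : ∀ i, ∃ c ∈ C, G.Adj (x i) c) :
    (completeBipartiteGraph (Fin 2) (Fin 3)).IsMinorOf G := by
  obtain ⟨c, hc, -⟩ := hCx 0
  refine ⟨Sum.elim ![{v}, C] fun i => {x i}, ?_, ?_, ?_, ?_⟩
  · rintro (i | i)
    · fin_cases i
      exacts [Set.singleton_nonempty v, ⟨c, hc⟩]
    · exact Set.singleton_nonempty _
  · rintro (i | i) (j | j) hij
    · fin_cases i <;> fin_cases j <;> simp_all
    · fin_cases i <;> simp [(hvx j).ne, hxC j]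
    · fin_cases j <;> simp [(hvx i).ne', hxC i]
    · simpa using hx.ne (fun h => hij (congrArg Sum.inr h))
  · rintro (i | i)
    · fin_cases i
      exacts [connected_induce_singleton v, hC]
    · exact connected_induce_singleton _
  · rintro (i | i) (j | j) hij
    · simp at hij
    · fin_cases i
      exacts [⟨v, rfl, x j, rfl, hvx j⟩, (hCx j).imp fun c ⟨hc, h⟩ => ⟨hc, x j, rfl, h.symm⟩]
    · fin_cases j
      exacts [⟨x i, rfl, v, rfl, (hvx i).symm⟩, ⟨x i, rfl, hCx i⟩]
    · simp at hij

theorem eq_of_common_adj_of_dist_lt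
    (hK : ¬ (completeBipartiteGraph (Fin 2) (Fin 3)).IsMinorOf G) {G' : G.Subgraph}
    (hG' : G'.coe.Connected) {v : V} (hv : v ∉ G'.verts) {u₀ u₁ u₂ w : G'.verts}
    (h₀ : G.Adj v u₀) (h₁ : G.Adj v u₁) (h₂ : G.Adj v u₂) (hw : ¬ G.Adj v w)
    (hw₁ : G.Adj u₁ w) (hw₂ : G.Adj u₂ w)
    (hd₁ : G'.coe.dist w u₀ < G'.coe.dist u₁ u₀) (hd₂ : G'.coe.dist w u₀ < G'.coe.dist u₂ u₀) :
    u₁ = u₂ := by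
  classical
  have hne_v (z : G'.verts) : (z : V) ≠ v := fun h => hv (h ▸ z.2)
  by_contra h₁₂
  obtain ⟨p, hp⟩ := hG'.exists_walk_length_eq_dist w u₀
  obtain ⟨C, hCW, hwC, hC, x, hx, hxW, c, hc, hxc⟩ :=
    (p.map G'.hom).exists_connected_induce_of_start_mem
      (W := {z | z ≠ v ∧ ¬ G.Adj v z}) ⟨hne_v w, hw⟩ fun h => h.2 h₀
  rw [Walk.support_map, List.mem_map] at hx
  obtain ⟨y, hy, rfl⟩ := hx
  have hvy : G.Adj v y := by_contra fun h => hxW ⟨hne_v y, h⟩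
  have hdy : G'.coe.dist y u₀ ≤ G'.coe.dist w u₀ :=
    hp ▸ (dist_le _).trans (p.length_dropUntil_le_length hy)
  have hy₁ : (y : V) ≠ u₁ := fun h => by rw [Subtype.ext h] at hdy; omega
  have hy₂ : (y : V) ≠ u₂ := fun h => by rw [Subtype.ext h] at hdy; omega
  have hu₁₂ : (u₁ : V) ≠ u₂ := Subtype.val_injective.ne h₁₂
  refine hK (completeBipartiteGraph_two_three_isMinorOf (v := v) (x := ![u₁, u₂, y]) (C := C)
    ?_ ?_ hC (fun h => (hCW h).1 rfl) ?_ ?_)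
  · intro i j hij
    fin_cases i <;> fin_cases j <;>
      simp [hu₁₂, hy₁, hy₂, hu₁₂.symm, hy₁.symm, hy₂.symm] at hij ⊢
  · intro i; fin_cases i <;> assumption
  · intro i; fin_cases i
    exacts [fun h => (hCW h).2 h₁, fun h => (hCW h).2 h₂, fun h => hxW (hCW h)]
  · intro i; fin_cases i
    exacts [⟨w, hwC, hw₁⟩, ⟨w, hwC, hw₂⟩, ⟨c, hc, hxc⟩]

theorem card_neighborFinset_erase_le_card_compl [Fintype V] [DecidableEq V]
    [DecidableRel G.Adj] (hK : ¬ (completeBipartiteGraph (Fin 2) (Fin 3)).IsMinorOf G)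
    (hG : G.CliqueFree 3) {v u₀ : V}
    (hH : ((⊤ : G.Subgraph).deleteVerts {v}).coe.Connected) (hvu₀ : G.Adj v u₀) :
    ((G.neighborFinset v).erase u₀).card ≤ (insert v (G.neighborFinset v))ᶜ.card := by
  set G' := (⊤ : G.Subgraph).deleteVerts {v}
  let q : G'.verts := ⟨u₀, trivial, hvu₀.ne'⟩
  have hnot_adj {u w : V} (hu : G.Adj v u) (huw : G.Adj u w) : ¬ G.Adj v w := fun hw =>
    hG {v, u, w} (is3Clique_triple_iff.2 ⟨hu, hw, huw⟩)
  refine Finset.card_le_card_of_forall_subsingleton (fun u w => ∃ a b : G'.verts,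
    ↑a = u ∧ ↑b = w ∧ G.Adj u w ∧ G'.coe.dist b q < G'.coe.dist a q) ?_ ?_
  · intro u hu
    obtain ⟨hne, hvu⟩ := Finset.mem_erase.1 hu
    rw [mem_neighborFinset] at hvu
    obtain ⟨b, hab, hd⟩ := hH.exists_adj_dist_lt (u := ⟨u, trivial, hvu.ne'⟩) (u₀ := q)
      fun h => hne (congrArg Subtype.val h)
    have hub : G.Adj u b := G'.hom.map_adj hab
    refine ⟨b, ?_, _, _, rfl, rfl, hub, hd⟩
    simpa [not_or] using ⟨b.2.2, hnot_adj hvu hub⟩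
  · rintro w hw u₁ ⟨hu₁, a₁, b', rfl, rfl, h₁, hd₁⟩ u₂ ⟨hu₂, a₂, b, rfl, hb, h₂, hd₂⟩
    obtain rfl : b = b' := Subtype.ext hb
    simp only [Finset.mem_erase, mem_neighborFinset] at hu₁ hu₂
    have hvb : ¬ G.Adj v b := fun h => by simp [h] at hw
    exact congrArg Subtype.val <|
      eq_of_common_adj_of_dist_lt hK hH (fun h => h.2 rfl) hvu₀ hu₁.2 hu₂.2 hvb h₁ h₂ hd₁ hd₂

theorem two_mul_degree_le_card [Fintype V] [DecidableRel G.Adj]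
    (hK : ¬ (completeBipartiteGraph (Fin 2) (Fin 3)).IsMinorOf G) (hG : G.CliqueFree 3) {v : V}
    (hH : ((⊤ : G.Subgraph).deleteVerts {v}).coe.Connected) :
    2 * G.degree v ≤ Fintype.card V := by
  classical
  obtain h | ⟨u₀, hu₀⟩ := (G.neighborFinset v).eq_empty_or_nonempty
  · simp [← card_neighborFinset_eq_degree, h]
  have hcard :=
    card_neighborFinset_erase_le_card_compl hK hG hH ((mem_neighborFinset G v u₀).1 hu₀)
  have hle := (insert v (G.neighborFinset v)).card_le_univ
  rw [Finset.card_erase_of_mem hu₀, Finset.card_compl,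
    Finset.card_insert_of_notMem (G.notMem_neighborFinset_self v)] at hcard
  rw [Finset.card_insert_of_notMem (G.notMem_neighborFinset_self v)] at hle
  have := Finset.card_pos.2 ⟨u₀, hu₀⟩
  rw [card_neighborFinset_eq_degree] at hcard hle this
  omega

end SimpleGraph

theorem stmt12_general {V : Type*} [Fintype V]
    (G : SimpleGraph V) [DecidableRel G.Adj]
    (hmax : G.MaxBipOuterplanar) (h2c : G.TwoConnected) :
    ∀ v : V, 2 * G.degree v ≤ Fintype.card V := fun _ =>
  two_mul_degree_le_card hmax.1.2 (hmax.2.1.cliqueFree (by norm_num)) (h2c.2.2 _)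

theorem stmt12 {V : Type*} [Fintype V] [DecidableEq V]
    (G : SimpleGraph V) [DecidableRel G.Adj]
    (hn : 2 ≤ Fintype.card V) (hmax : G.MaxBipOuterplanar) (h2c : G.TwoConnected) :
    ∀ v : V, 2 * G.degree v ≤ Fintype.card V :=
  stmt12_general G hmax h2c
end
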